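/- arXiv:2306.14962 — 6 statements merged into one kernel-verified Lean document; each statement's English description precedes it below -/
import Mathlib

section
/- Let H, G₁, …, Gₙ be Hermitian d×d complex matrices with G_jG_k = G_kG_j for all j, k, and suppose each G_j either commutes or anticommutes with H. For θ ∈ ℝⁿ let U(θ) = ∏_{j=1}^n exp(−i θ_j G_j), fix a unit vector ψ₀ ∈ ℂ^d, and let C(θ) = ⟨ψ₀, U(θ)* H U(θ) ψ₀⟩. Fix t ≥ 1 and a multi-index α = (α₁, …, α_t) ∈ {1,…,n}^t. If every G_{α_ℓ} anticommutes with H, then ∂^t C / ∂θ_{α₁} ⋯ ∂θ_{α_t} (θ) = i^t 2^t ⟨ψ₀, U(θ)* (∏_{ℓ=1}^t G_{α_ℓ}) H U(θ) ψ₀⟩; if at least one G_{α_ℓ} commutes with H, then ∂^t C / ∂θ_{α₁} ⋯ ∂θ_{α_t} (θ) = 0 for all θ. -/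
open scoped Matrix

/-- The partial derivative of a function of n real variables along coordinate `j`. -/
noncomputable def partialDeriv' {n : ℕ} (j : Fin n) (F : (Fin n → ℝ) → ℂ) :
    (Fin n → ℝ) → ℂ :=
  fun θ => deriv (fun t : ℝ => F (Function.update θ j t)) (θ j)

open NormedSpace

section aux
variable {d : ℕ}
local notation "𝕄" => Matrix (Fin d) (Fin d) ℂ

lemma my_exp_swap (X Y M : 𝕄) (h : X * M = M * Y) :
    exp X * M = M * exp Y := by
  letI : SeminormedRing 𝕄 := Matrix.linftyOpSemiNormedRing
  letI : NormedRing 𝕄 := Matrix.linftyOpNormedRing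
  letI : NormedAlgebra ℂ 𝕄 := Matrix.linftyOpNormedAlgebra
  haveI : CompleteSpace 𝕄 := (by infer_instance : CompleteSpace (Fin d → Fin d → ℂ))
  have hpow : ∀ k : ℕ, X ^ k * M = M * Y ^ k := by
    intro k
    induction k with
    | zero => simp
    | succ k ih =>
      rw [pow_succ, pow_succ, mul_assoc, h, ← mul_assoc, ih, mul_assoc]
  simp only [exp_eq_tsum ℂ]
  erw [
    ← (expSeries_summable' (𝕂 := ℂ) X).tsum_mul_right M,
    ← (expSeries_summable' (𝕂 := ℂ) Y).tsum_mul_left M]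
  congr 1
  funext k
  rw [smul_mul_assoc, hpow, mul_smul_comm]

lemma my_prod_exp {n : ℕ} (f : Fin n → 𝕄) (h : ∀ i j, Commute (f i) (f j))
    (L : List (Fin n)) :
    ((L.map fun k => exp (f k)).prod = exp (L.map f).sum) := by
  induction L with
  | nil => simp [exp_zero]
  | cons a L ih =>
    rw [List.map_cons, List.prod_cons, ih, List.map_cons, List.sum_cons,
      Matrix.exp_add_of_commute]
    exact Commute.list_sum_right _ _ fun b hb => by
      obtain ⟨i, _, rfl⟩ := List.mem_map.mp hb
      exact h a i
end aux

section aux2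
variable {d n : ℕ}
local notation "𝕄" => Matrix (Fin d) (Fin d) ℂ

lemma my_sum_update (G : Fin n → 𝕄) (θ : Fin n → ℝ) (j : Fin n) (t : ℝ) :
    (∑ k, (-(Function.update θ j t k : ℂ) * Complex.I) • G k)
      = ((-((t - θ j : ℝ) : ℂ) * Complex.I) • G j)
        + ∑ k, (-(θ k : ℂ) * Complex.I) • G k := by
  have h1 : (fun k => (-(Function.update θ j t k : ℂ) * Complex.I) • G k)
      = Function.update (fun k => (-(θ k : ℂ) * Complex.I) • G k) j
          ((-(t : ℂ) * Complex.I) • G j) := by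
    funext k
    rcases eq_or_ne k j with rfl | hk
    · simp
    · simp [Function.update_of_ne hk]
  rw [h1, Finset.sum_update_of_mem (Finset.mem_univ j),
    Finset.sum_eq_sum_sdiff_singleton_add (Finset.mem_univ j)
      (fun k => (-(θ k : ℂ) * Complex.I) • G k)]
  push_cast
  module

lemma my_U_update (G : Fin n → 𝕄) (hcomm : ∀ j k, G j * G k = G k * G j)
    (U : (Fin n → ℝ) → 𝕄)
    (hU : ∀ θ, U θ = ((List.finRange n).map
      (fun k => NormedSpace.exp ((-(θ k : ℂ) * Complex.I) • G k))).prod)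
    (θ : Fin n → ℝ) (j : Fin n) (t : ℝ) :
    U (Function.update θ j t)
      = exp ((-((t - θ j : ℝ) : ℂ) * Complex.I) • G j) * U θ := by
  have hexp : ∀ (θ : Fin n → ℝ), U θ = exp (∑ k, (-(θ k : ℂ) * Complex.I) • G k) := by
    intro θ'
    rw [hU θ', my_prod_exp _ (fun i k => (((show Commute (G i) (G k) from hcomm i k)).smul_left _).smul_right _),
      ← Fin.sum_univ_def]
  rw [hexp, hexp, my_sum_update, Matrix.exp_add_of_commute]
  exact Commute.sum_right _ _ _ fun k _ =>
    ((show Commute (G j) (G k) from hcomm j k).smul_left _).smul_right _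
end aux2

noncomputable def Fq {d n : ℕ} (U : (Fin n → ℝ) → Matrix (Fin d) (Fin d) ℂ)
    (ψ : Fin d → ℂ) (M : Matrix (Fin d) (Fin d) ℂ) : (Fin n → ℝ) → ℂ :=
  fun θ => star ψ ⬝ᵥ ((U θ)ᴴ * M * U θ).mulVec ψ

section aux3
variable {d n : ℕ}
local notation "𝕄" => Matrix (Fin d) (Fin d) ℂ

set_option maxHeartbeats 1000000 in
lemma my_key (G : Fin n → 𝕄) (hGherm : ∀ j, (G j).IsHermitian)
    (hcomm : ∀ j k, G j * G k = G k * G j)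
    (U : (Fin n → ℝ) → 𝕄)
    (hU : ∀ θ, U θ = ((List.finRange n).map
      (fun k => NormedSpace.exp ((-(θ k : ℂ) * Complex.I) • G k))).prod)
    (ψ : Fin d → ℂ) (j : Fin n) (M : 𝕄) :
    (G j * M = M * G j → partialDeriv' j (Fq U ψ M) = fun _ => 0) ∧
    (G j * M = -(M * G j) →
      partialDeriv' j (Fq U ψ M) = fun θ => (2 * Complex.I) * Fq U ψ (G j * M) θ) := by
  letI : SeminormedRing 𝕄 := Matrix.linftyOpSemiNormedRing
  letI : NormedRing 𝕄 := Matrix.linftyOpNormedRing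
  letI : NormedAlgebra ℂ 𝕄 := Matrix.linftyOpNormedAlgebra
  letI : NormedAlgebra ℝ 𝕄 := Matrix.linftyOpNormedAlgebra
  haveI : CompleteSpace 𝕄 := (by infer_instance : CompleteSpace (Fin d → Fin d → ℂ))
  have hWH : ∀ s : ℝ, (exp ((-(s : ℂ) * Complex.I) • G j))ᴴ
      = exp (((s : ℂ) * Complex.I) • G j) := by
    intro s
    rw [← Matrix.exp_conjTranspose, Matrix.conjTranspose_smul, (hGherm j).eq]
    congr 1
    simp [Complex.ext_iff]
  have hnegX : ∀ s : ℝ, ((-(s : ℂ) * Complex.I) • G j) = -(((s : ℂ) * Complex.I) • G j) := by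
    intro s; rw [← neg_smul, neg_mul]
  constructor
  · -- commuting case
    intro h
    funext θ
    have hmid : ∀ (s : ℝ) (N : 𝕄),
        exp (((s : ℂ) * Complex.I) • G j) * (M * (exp ((-(s : ℂ) * Complex.I) • G j) * N))
          = M * N := by
      intro s N
      have hc : Commute ((((s : ℂ)) * Complex.I) • G j) M :=
        (show Commute (G j) M from h).smul_left _
      rw [← mul_assoc, ← mul_assoc, (hc.exp_left).eq, mul_assoc M, hnegX,
        ← Matrix.exp_add_of_commute _ _ (Commute.neg_right (Commute.refl (((s : ℂ) * Complex.I) • G j))),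
        add_neg_cancel, exp_zero, mul_one]
    have hfun : (fun t : ℝ => Fq U ψ M (Function.update θ j t)) = fun _ => Fq U ψ M θ := by
      funext t
      simp only [Fq]
      rw [my_U_update G hcomm U hU θ j t, Matrix.conjTranspose_mul, hWH]
      simp only [mul_assoc]
      rw [hmid]
    simp only [partialDeriv']
    rw [hfun]
    exact deriv_const _ _
  · -- anticommuting case
    intro h
    funext θ
    set B : 𝕄 := (-2 * Complex.I) • G j with hB
    have hmid2 : ∀ (s : ℝ) (N : 𝕄),
        exp (((s : ℂ) * Complex.I) • G j) * (M * (exp ((-(s : ℂ) * Complex.I) • G j) * N))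
          = M * (exp (s • B) * N) := by
      intro s N
      have hswap : exp (((s : ℂ) * Complex.I) • G j) * M
          = M * exp ((-(s : ℂ) * Complex.I) • G j) := by
        apply my_exp_swap
        rw [smul_mul_assoc, h, mul_smul_comm]
        simp [smul_neg, neg_mul]
      have hBs : ((-(s : ℂ) * Complex.I) • G j) + ((-(s : ℂ) * Complex.I) • G j)
          = s • B := by
        rw [← add_smul, hB, ← algebraMap_smul ℂ s ((-2 * Complex.I) • G j),
          Complex.coe_algebraMap, smul_smul]
        congr 1
        ring
      rw [← mul_assoc, ← mul_assoc, hswap, mul_assoc M,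
        ← Matrix.exp_add_of_commute _ _ (Commute.refl _), hBs, mul_assoc]
    have hder : HasDerivAt (fun t : ℝ => exp ((t - θ j) • B)) B (θ j) := by
      have h0 : HasDerivAt (fun u : ℝ => exp (u • B)) B ((θ j) - θ j) := by
        rw [sub_self]
        have := hasDerivAt_exp_smul_const (𝕂 := ℝ) B (0 : ℝ)
        simp at this
        exact this
      have hsub : HasDerivAt (fun t : ℝ => t - θ j) 1 (θ j) :=
        (hasDerivAt_id (θ j)).sub_const _
      have hcomp : HasDerivAt ((fun u : ℝ => exp (u • B)) ∘ (fun t : ℝ => t - θ j))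
          ((1 : ℝ) • B) (θ j) := HasDerivAt.scomp _ h0 hsub
      simpa [Function.comp_def] using hcomp
    let Φ : 𝕄 →ₗ[ℂ] ℂ :=
      { toFun := fun X => star ψ ⬝ᵥ ((U θ)ᴴ * (M * (X * U θ))).mulVec ψ
        map_add' := by
          intro X Y
          simp [Matrix.add_mul, Matrix.mul_add, Matrix.add_mulVec, dotProduct_add]
        map_smul' := by
          intro c X
          simp [Matrix.smul_mul, Matrix.mul_smul, Matrix.smul_mulVec,
            dotProduct_smul, smul_eq_mul] }
    have hΦcont : Continuous Φ := LinearMap.continuous_of_finiteDimensional Φ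
    have hfun : (fun t : ℝ => Fq U ψ M (Function.update θ j t))
        = fun t : ℝ => Φ (exp ((t - θ j) • B)) := by
      funext t
      simp only [Fq]
      rw [my_U_update G hcomm U hU θ j t, Matrix.conjTranspose_mul, hWH]
      simp only [mul_assoc]
      rw [hmid2]
      rfl
    have hd2 : HasDerivAt (fun t : ℝ => Φ (exp ((t - θ j) • B))) (Φ B) (θ j) := by
      exact ((LinearMap.toContinuousLinearMap Φ).restrictScalars ℝ).hasFDerivAt.comp_hasDerivAt
        (θ j) hder
    simp only [partialDeriv']
    rw [hfun, hd2.deriv]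
    show star ψ ⬝ᵥ ((U θ)ᴴ * (M * (B * U θ))).mulVec ψ = _
    have h' : M * G j = -(G j * M) := by rw [h]; simp
    have hMB : M * (B * U θ) = (2 * Complex.I) • ((G j * M) * U θ) := by
      rw [hB, ← mul_assoc, mul_smul_comm, h']
      simp [smul_mul_assoc, smul_smul, ← neg_smul]
    rw [hMB]
    show star ψ ⬝ᵥ ((U θ)ᴴ * ((2 * Complex.I) • (G j * M * U θ))).mulVec ψ = _
    simp [Fq, Matrix.mul_smul, Matrix.smul_mulVec, dotProduct_smul, smul_eq_mul, mul_assoc]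
end aux3

section aux4
variable {d n : ℕ}
local notation "𝕄" => Matrix (Fin d) (Fin d) ℂ

lemma my_fold (G : Fin n → 𝕄) (H : 𝕄) (hGherm : ∀ j, (G j).IsHermitian)
    (hcomm : ∀ j k, G j * G k = G k * G j)
    (hca : ∀ j, G j * H = H * G j ∨ G j * H = -(H * G j))
    (U : (Fin n → ℝ) → 𝕄)
    (hU : ∀ θ, U θ = ((List.finRange n).map
      (fun k => NormedSpace.exp ((-(θ k : ℂ) * Complex.I) • G k))).prod)
    (ψ : Fin d → ℂ) :
    ∀ L : List (Fin n), ∀ Q : 𝕄, (∀ k, G k * Q = Q * G k) →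
    ((∀ j ∈ L, G j * H = -(H * G j)) →
      L.foldr partialDeriv' (Fq U ψ (Q * H))
        = fun θ => (2 * Complex.I) ^ L.length * Fq U ψ ((L.map G).prod * Q * H) θ)
    ∧ ((∃ j ∈ L, G j * H = H * G j) →
      L.foldr partialDeriv' (Fq U ψ (Q * H)) = fun _ => 0) := by
  intro L
  induction L with
  | nil =>
    intro Q hQ
    constructor
    · intro _
      funext θ
      simp
    · rintro ⟨j, hj, -⟩
      exact absurd hj List.not_mem_nil
  | cons a L ih =>
    intro Q hQ
    set Q' : 𝕄 := (L.map G).prod * Q with hQ'def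
    have hQ' : ∀ k, G k * Q' = Q' * G k := by
      intro k
      have h1 : Commute (G k) ((L.map G).prod) :=
        Commute.list_prod_right _ _ fun x hx => by
          obtain ⟨i, _, rfl⟩ := List.mem_map.mp hx
          exact hcomm k i
      rw [hQ'def, ← mul_assoc, h1.eq, mul_assoc, hQ k, ← mul_assoc]
    have hm : G a * (Q' * H) = ((a :: L).map G).prod * Q * H := by
      simp [hQ'def, mul_assoc]
    constructor
    · intro hanti
      have hL := (ih Q hQ).1 fun j hj => hanti j (List.mem_cons_of_mem _ hj)
      have hA : G a * (Q' * H) = -((Q' * H) * G a) := by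
        rw [← mul_assoc, hQ' a, mul_assoc, hanti a (List.mem_cons_self)]
        simp [hQ'def, mul_assoc, mul_neg]
      have hkey := (my_key G hGherm hcomm U hU ψ a (Q' * H)).2 hA
      funext θ
      rw [List.foldr_cons, hL]
      simp only [partialDeriv']
      rw [deriv_const_mul_field]
      have hk := congrFun hkey θ
      simp only [partialDeriv'] at hk
      rw [hk, hm]
      rw [List.length_cons, pow_succ]
      ring
    · rintro ⟨j', hj', hcj⟩
      rcases List.mem_cons.mp hj' with rfl | hmem
      · by_cases hex : ∃ k ∈ L, G k * H = H * G k
        · have hL0 := (ih Q hQ).2 hex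
          funext θ
          rw [List.foldr_cons, hL0]
          simp [partialDeriv']
        · have hall : ∀ k ∈ L, G k * H = -(H * G k) :=
            fun k hk => (hca k).resolve_left fun hc => hex ⟨k, hk, hc⟩
          have hL := (ih Q hQ).1 hall
          have hCc : G j' * (Q' * H) = (Q' * H) * G j' := by
            rw [← mul_assoc, hQ' j', mul_assoc, hcj]
            simp [hQ'def, mul_assoc]
          have hkey := (my_key G hGherm hcomm U hU ψ j' (Q' * H)).1 hCc
          funext θ
          rw [List.foldr_cons, hL]
          simp only [partialDeriv']
          rw [deriv_const_mul_field]
          have hk := congrFun hkey θ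
          simp only [partialDeriv'] at hk
          rw [hk, mul_zero]
      · have hL0 := (ih Q hQ).2 ⟨j', hmem, hcj⟩
        funext θ
        rw [List.foldr_cons, hL0]
        simp [partialDeriv']
end aux4

/-- t-th order partial derivatives of a commuting-generator circuit:
∂^t C/∂θ_{α₁}⋯∂θ_{α_t}(θ) = i^t 2^t ⟨ψ₀, U(θ)* (∏ℓ G_{αℓ}) H U(θ) ψ₀⟩ when all
G_{αℓ} anticommute with H, and 0 when at least one G_{αℓ} commutes with H. -/
theorem stmt_4 {d n : ℕ} (H : Matrix (Fin d) (Fin d) ℂ)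
    (G : Fin n → Matrix (Fin d) (Fin d) ℂ)
    (hH : H.IsHermitian) (hGherm : ∀ j, (G j).IsHermitian)
    (hcomm : ∀ j k, G j * G k = G k * G j)
    (hca : ∀ j, G j * H = H * G j ∨ G j * H = -(H * G j))
    (U : (Fin n → ℝ) → Matrix (Fin d) (Fin d) ℂ)
    (hU : ∀ θ, U θ =
      ((List.finRange n).map
        (fun k => NormedSpace.exp ((-(θ k : ℂ) * Complex.I) • G k))).prod)
    (ψ₀ : Fin d → ℂ) (hψ₀ : star ψ₀ ⬝ᵥ ψ₀ = 1)
    (C : (Fin n → ℝ) → ℂ)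
    (hC : ∀ θ, C θ = star ψ₀ ⬝ᵥ ((U θ)ᴴ * H * U θ).mulVec ψ₀)
    (t : ℕ) (ht : 1 ≤ t) (α : Fin t → Fin n) :
    ((∀ ℓ, G (α ℓ) * H = -(H * G (α ℓ))) →
      ∀ θ, ((List.ofFn α).foldr partialDeriv' C) θ
        = Complex.I ^ t * 2 ^ t *
          (star ψ₀ ⬝ᵥ ((U θ)ᴴ * (((List.ofFn α).map G).prod * H) * U θ).mulVec ψ₀)) ∧
    ((∃ ℓ, G (α ℓ) * H = H * G (α ℓ)) →
      ∀ θ, ((List.ofFn α).foldr partialDeriv' C) θ = 0) := by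
  have hCF : C = Fq U ψ₀ ((1 : Matrix (Fin d) (Fin d) ℂ) * H) := by
    funext θ
    rw [hC]
    simp [Fq]
  have hQ1 : ∀ k, G k * (1 : Matrix (Fin d) (Fin d) ℂ) = 1 * G k := by simp
  have hfold := my_fold G H hGherm hcomm hca U hU ψ₀ (List.ofFn α) 1 hQ1
  constructor
  · intro hanti θ
    have h1 := hfold.1 fun j hj => by
      obtain ⟨ℓ, rfl⟩ := Set.mem_range.mp ((List.mem_ofFn' _ _).mp hj)
      exact hanti ℓ
    rw [hCF, congrFun h1 θ]
    simp only [Fq, List.length_ofFn, mul_one]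
    ring
  · intro ⟨ℓ, hℓ⟩ θ
    have h2 := hfold.2 ⟨α ℓ, (List.mem_ofFn' _ _).mpr (Set.mem_range.mpr ⟨ℓ, rfl⟩), hℓ⟩
    rw [hCF, congrFun h2 θ]
end

section
/- Let H, G₁, …, Gₙ be d×d complex matrices with G_jG_k = G_kG_j for all j, k, and suppose every G_j anticommutes with H (G_jH = −HG_j). Let α ∈ {1,…,n}^t and α′ ∈ {1,…,n}^{t′} be multi-indices with t ≡ t′ (mod 2). Then the matrices A = (∏_{ℓ=1}^t G_{α_ℓ}) H and B = (∏_{ℓ=1}^{t′} G_{α′_ℓ}) H commute: AB = BA. -/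
section Aux

variable {d n : ℕ} (H : Matrix (Fin d) (Fin d) ℂ)
    (G : Fin n → Matrix (Fin d) (Fin d) ℂ)

lemma aux_swap (hanti : ∀ j, G j * H = -(H * G j)) (l : List (Fin n)) :
    H * (l.map G).prod = ((-1 : ℂ) ^ l.length) • ((l.map G).prod * H) := by
  induction l with
  | nil => simp
  | cons a l ih =>
    simp only [List.map_cons, List.prod_cons, List.length_cons]
    rw [← mul_assoc, show H * G a = -(G a * H) from by rw [hanti a, neg_neg],
      neg_mul, mul_assoc, ih, mul_smul_comm, pow_succ]
    rw [mul_comm ((-1:ℂ)^l.length) (-1), mul_smul]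
    simp [mul_assoc]

lemma aux_prod_comm (hcomm : ∀ j k, G j * G k = G k * G j)
    (l l' : List (Fin n)) :
    (l.map G).prod * (l'.map G).prod = (l'.map G).prod * (l.map G).prod := by
  induction l with
  | nil => simp
  | cons a l ih =>
    have h1 : ∀ m : List (Fin n), G a * (m.map G).prod = (m.map G).prod * G a := by
      intro m
      induction m with
      | nil => simp
      | cons b m ihm =>
        simp only [List.map_cons, List.prod_cons, ← mul_assoc, hcomm a b]
        rw [mul_assoc, ihm, mul_assoc]
    simp only [List.map_cons, List.prod_cons]
    rw [mul_assoc, ih, ← mul_assoc, h1, mul_assoc]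

end Aux

/-- For pairwise-commuting d×d matrices G₁,…,Gₙ each anticommuting
with H, and multi-indices α ∈ [n]^t, α′ ∈ [n]^{t′} with t ≡ t′ (mod 2), the
matrices A = (∏ℓ G_{αℓ})H and B = (∏ℓ G_{α′ℓ})H commute. -/
theorem stmt_5 {d n : ℕ} (H : Matrix (Fin d) (Fin d) ℂ)
    (G : Fin n → Matrix (Fin d) (Fin d) ℂ)
    (hcomm : ∀ j k, G j * G k = G k * G j)
    (hanti : ∀ j, G j * H = -(H * G j))
    (t t' : ℕ) (hpar : t % 2 = t' % 2)
    (α : Fin t → Fin n) (α' : Fin t' → Fin n) :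
    (((List.ofFn α).map G).prod * H) * (((List.ofFn α').map G).prod * H)
      = (((List.ofFn α').map G).prod * H) * (((List.ofFn α).map G).prod * H) := by
  set P := ((List.ofFn α).map G).prod
  set Q := ((List.ofFn α').map G).prod
  have h1 : H * Q = ((-1 : ℂ) ^ t') • (Q * H) := by
    have := aux_swap H G hanti (List.ofFn α')
    simpa only [List.length_ofFn] using this
  have h2 : H * P = ((-1 : ℂ) ^ t) • (P * H) := by
    have := aux_swap H G hanti (List.ofFn α)
    simpa only [List.length_ofFn] using this
  have hPQ : P * Q = Q * P := aux_prod_comm G hcomm _ _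
  have hsign : ((-1 : ℂ) ^ t) = ((-1 : ℂ) ^ t') := by
    rcases Nat.even_or_odd t with he | ho
    · have : Even t' := Nat.even_iff.mpr (hpar ▸ Nat.even_iff.mp he)
      rw [he.neg_one_pow, this.neg_one_pow]
    · have : Odd t' := Nat.odd_iff.mpr (hpar ▸ Nat.odd_iff.mp ho)
      rw [ho.neg_one_pow, this.neg_one_pow]
  calc P * H * (Q * H) = P * (H * Q) * H := by simp only [mul_assoc]
    _ = ((-1 : ℂ) ^ t') • (P * Q * H * H) := by
        rw [h1]; simp [mul_smul_comm, smul_mul_assoc, mul_assoc]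
    _ = ((-1 : ℂ) ^ t) • (Q * P * H * H) := by rw [hPQ, hsign]
    _ = Q * (H * P) * H := by
        rw [h2]; simp [mul_smul_comm, smul_mul_assoc, mul_assoc]
    _ = Q * H * (P * H) := by simp only [mul_assoc]
end

section
/- Let G₁, …, Gₙ be Hermitian d×d complex matrices with G_jG_k = G_kG_j for all j, k, and for θ ∈ ℝⁿ let U(θ) = ∏_{j=1}^n exp(−i θ_j G_j). Then for all j, k and all θ: (i) U(θ)* ∂U/∂θ_j(θ) = −i G_j; (ii) (∂U/∂θ_j(θ))* ∂U/∂θ_k(θ) = G_j G_k; and (iii) for any unit vector ψ₀ ∈ ℂ^d, the quantum Fisher information entry F_jk(θ) := Re ⟨ψ₀, (∂U/∂θ_j(θ))* ∂U/∂θ_k(θ) ψ₀⟩ − ⟨ψ₀, (∂U/∂θ_j(θ))* U(θ) ψ₀⟩ ⟨ψ₀, U(θ)* ∂U/∂θ_k(θ) ψ₀⟩ equals ⟨ψ₀, G_jG_k ψ₀⟩ − ⟨ψ₀, G_j ψ₀⟩⟨ψ₀, G_k ψ₀⟩, which is real and independent of θ. -/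
open scoped Matrix

lemma auxSlope {d : ℕ} (A C : Matrix (Fin d) (Fin d) ℂ) (t : ℝ) :
    Filter.Tendsto (slope (fun u : ℝ => NormedSpace.exp (u • A) * C) t) (nhdsWithin t {t}ᶜ)
      (nhds (NormedSpace.exp (t • A) * A * C)) := by
  letI : SeminormedRing (Matrix (Fin d) (Fin d) ℂ) := Matrix.linftyOpSemiNormedRing
  letI : NormedRing (Matrix (Fin d) (Fin d) ℂ) := Matrix.linftyOpNormedRing
  letI : NormedAlgebra ℝ (Matrix (Fin d) (Fin d) ℂ) := Matrix.linftyOpNormedAlgebra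
  letI : NormedAlgebra ℂ (Matrix (Fin d) (Fin d) ℂ) := Matrix.linftyOpNormedAlgebra
  have h := (hasDerivAt_exp_smul_const (𝕂 := ℝ) A t).mul_const C
  rw [hasDerivAt_iff_tendsto_slope] at h
  exact h

attribute [local instance] Matrix.normedAddCommGroup Matrix.normedSpace

lemma auxD {d : ℕ} (A C : Matrix (Fin d) (Fin d) ℂ) (t : ℝ) :
    HasDerivAt (fun u : ℝ => NormedSpace.exp (u • A) * C)
      (NormedSpace.exp (t • A) * A * C) t := by
  refine hasDerivAt_iff_tendsto_slope.mpr ?_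
  exact auxSlope A C t

lemma exp_list_prod {d : ℕ} {α : Type*} (f : α → Matrix (Fin d) (Fin d) ℂ)
    (h : ∀ a b, Commute (f a) (f b)) : ∀ l : List α,
    (l.map fun k => NormedSpace.exp (f k)).prod = NormedSpace.exp ((l.map f).sum)
  | [] => by simp [NormedSpace.exp_zero]
  | a :: l => by
    rw [List.map_cons, List.prod_cons, exp_list_prod f h l, List.map_cons, List.sum_cons,
      Matrix.exp_add_of_commute _ _ (Commute.list_sum_right _ _ fun x hx => by
        obtain ⟨b, _, rfl⟩ := List.mem_map.mp hx
        exact h a b)]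

/-- For a commuting-generator circuit U(θ) = ∏ⱼ exp(−iθⱼGⱼ) with
Hermitian pairwise-commuting generators: (i) U(θ)* ∂ⱼU(θ) = −iGⱼ;
(ii) (∂ⱼU(θ))* ∂ₖU(θ) = GⱼGₖ; (iii) the quantum Fisher information entry
F_jk(θ) equals the covariance ⟨ψ₀,GⱼGₖψ₀⟩ − ⟨ψ₀,Gⱼψ₀⟩⟨ψ₀,Gₖψ₀⟩, which is real
and independent of θ. -/
theorem stmt_6 {d n : ℕ} (G : Fin n → Matrix (Fin d) (Fin d) ℂ)
    (hGherm : ∀ j, (G j).IsHermitian)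
    (hcomm : ∀ j k, G j * G k = G k * G j)
    (U : (Fin n → ℝ) → Matrix (Fin d) (Fin d) ℂ)
    (hU : ∀ θ, U θ =
      ((List.finRange n).map
        (fun k => NormedSpace.exp ((-(θ k : ℂ) * Complex.I) • G k))).prod)
    (pU : Fin n → (Fin n → ℝ) → Matrix (Fin d) (Fin d) ℂ)
    (hpU : ∀ j θ, pU j θ = deriv (fun t : ℝ => U (Function.update θ j t)) (θ j))
    (j k : Fin n) (θ : Fin n → ℝ) :
    (U θ)ᴴ * pU j θ = (-Complex.I) • G j ∧
    (pU j θ)ᴴ * pU k θ = G j * G k ∧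
    ∀ ψ₀ : Fin d → ℂ, star ψ₀ ⬝ᵥ ψ₀ = 1 →
      ((((star ψ₀ ⬝ᵥ ((pU j θ)ᴴ * pU k θ).mulVec ψ₀).re : ℂ)
          - (star ψ₀ ⬝ᵥ ((pU j θ)ᴴ * U θ).mulVec ψ₀)
            * (star ψ₀ ⬝ᵥ ((U θ)ᴴ * pU k θ).mulVec ψ₀))
        = (star ψ₀ ⬝ᵥ (G j * G k).mulVec ψ₀)
          - (star ψ₀ ⬝ᵥ (G j).mulVec ψ₀) * (star ψ₀ ⬝ᵥ (G k).mulVec ψ₀)) ∧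
      ((star ψ₀ ⬝ᵥ (G j * G k).mulVec ψ₀)
          - (star ψ₀ ⬝ᵥ (G j).mulVec ψ₀) * (star ψ₀ ⬝ᵥ (G k).mulVec ψ₀)).im = 0 := by
  -- the generator sum
  set S : (Fin n → ℝ) → Matrix (Fin d) (Fin d) ℂ :=
    fun θ' => ∑ i, (-(θ' i : ℂ) * Complex.I) • G i with hS
  have hcomm' : ∀ (a b : Fin n) (x y : ℂ), Commute (x • G a) (y • G b) := fun a b x y =>
    ((show Commute (G a) (G b) from hcomm a b).smul_left x).smul_right y
  have hUS : ∀ θ', U θ' = NormedSpace.exp (S θ') := by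
    intro θ'
    rw [hU, exp_list_prod _ (fun a b => hcomm' a b _ _), hS]
    congr 1
  -- real scalar smul as complex
  have hsm : ∀ (c : ℝ) (M : Matrix (Fin d) (Fin d) ℂ), c • M = (c : ℂ) • M := by
    intro c M
    ext i j
    simp [Complex.real_smul]
  -- conjugate transpose of S
  have hSh : ∀ θ', (S θ')ᴴ = -(S θ') := by
    intro θ'
    rw [hS]
    simp only [Matrix.conjTranspose_sum, Matrix.conjTranspose_smul, ← Finset.sum_neg_distrib]
    refine Finset.sum_congr rfl fun i _ => ?_
    rw [(hGherm i).eq, ← neg_smul]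
    congr 1
    simp [Complex.ext_iff]
  have hUconj : ∀ θ', (U θ')ᴴ = NormedSpace.exp (-(S θ')) := by
    intro θ'
    rw [hUS, ← Matrix.exp_conjTranspose, hSh]
  have hUnit : ∀ θ', (U θ')ᴴ * U θ' = 1 := by
    intro θ'
    rw [hUconj, hUS θ', ← Matrix.exp_add_of_commute _ _ ((Commute.refl (S θ')).neg_left),
      neg_add_cancel, NormedSpace.exp_zero]
  -- the derivative formula
  have hpU' : ∀ i : Fin n, pU i θ = U θ * ((-Complex.I) • G i) := by
    intro i
    set A : Matrix (Fin d) (Fin d) ℂ := (-Complex.I) • G i with hA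
    set R : Matrix (Fin d) (Fin d) ℂ :=
      ∑ l ∈ Finset.univ.erase i, (-(θ l : ℂ) * Complex.I) • G l with hR
    have hAR : Commute A R := Commute.sum_right _ _ _ fun l _ => hcomm' i l _ _
    have hsplit : ∀ t : ℝ, S (Function.update θ i t) = t • A + R := by
      intro t
      rw [hS]
      beta_reduce
      rw [← Finset.add_sum_erase _ _ (Finset.mem_univ i)]
      congr 1
      · rw [Function.update_self, hsm, hA, smul_smul]
        ring_nf
      · refine Finset.sum_congr rfl fun l hl => ?_
        rw [Function.update_of_ne (Finset.ne_of_mem_erase hl)]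
    have hUt : ∀ t : ℝ, U (Function.update θ i t) =
        NormedSpace.exp (t • A) * NormedSpace.exp R := by
      intro t
      rw [hUS, hsplit, Matrix.exp_add_of_commute _ _ (hAR.smul_left t)]
    have hD : HasDerivAt (fun t : ℝ => U (Function.update θ i t))
        (NormedSpace.exp ((θ i) • A) * A * NormedSpace.exp R) (θ i) := by
      have h := auxD A (NormedSpace.exp R) (θ i)
      have hfe : (fun t : ℝ => U (Function.update θ i t)) =
          fun t : ℝ => NormedSpace.exp (t • A) * NormedSpace.exp R := funext hUt
      rw [hfe]
      exact h
    have hAe : Commute A (NormedSpace.exp R) := hAR.exp_right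
    have hUθ : U θ = NormedSpace.exp ((θ i) • A) * NormedSpace.exp R := by
      have := hUt (θ i)
      rwa [Function.update_eq_self] at this
    rw [hpU i]; refine hD.deriv.trans ?_; rw [Matrix.mul_assoc, hAe.eq, hUθ, Matrix.mul_assoc]
  -- part (i) for arbitrary index
  have hi : ∀ i : Fin n, (U θ)ᴴ * pU i θ = (-Complex.I) • G i := by
    intro i
    rw [hpU' i, ← Matrix.mul_assoc, hUnit, Matrix.one_mul]
  -- part (ii)
  have hii : (pU j θ)ᴴ * pU k θ = G j * G k := by
    rw [hpU' j, hpU' k, Matrix.conjTranspose_mul, Matrix.conjTranspose_smul,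
      Matrix.mul_assoc, ← Matrix.mul_assoc ((U θ)ᴴ), hUnit, Matrix.one_mul,
      (hGherm j).eq, Matrix.smul_mul, Matrix.mul_smul, smul_smul]
    simp
  -- the cross terms
  have hjU : (pU j θ)ᴴ * U θ = Complex.I • G j := by
    rw [hpU' j, Matrix.conjTranspose_mul, Matrix.conjTranspose_smul, Matrix.mul_assoc,
      hUnit, Matrix.mul_one, (hGherm j).eq]
    simp
  -- hermitian-ness of G j * G k
  have hGGherm : (G j * G k).IsHermitian := by
    rw [Matrix.IsHermitian, Matrix.conjTranspose_mul, (hGherm j).eq, (hGherm k).eq, hcomm]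
  -- real expectation values for Hermitian matrices
  have hreal : ∀ (M : Matrix (Fin d) (Fin d) ℂ), M.IsHermitian → ∀ ψ : Fin d → ℂ,
      (star ψ ⬝ᵥ M.mulVec ψ).im = 0 := by
    intro M hM ψ
    rw [← Complex.conj_eq_iff_im]
    calc (starRingEnd ℂ) (star ψ ⬝ᵥ M.mulVec ψ)
        = star (star ψ ⬝ᵥ M.mulVec ψ) := rfl
      _ = star (M.mulVec ψ) ⬝ᵥ star (star ψ) := by rw [← Matrix.star_dotProduct_star]
      _ = (star ψ ᵥ* Mᴴ) ⬝ᵥ ψ := by rw [Matrix.star_mulVec, star_star]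
      _ = star ψ ⬝ᵥ Mᴴ.mulVec ψ := (Matrix.dotProduct_mulVec _ _ _).symm
      _ = star ψ ⬝ᵥ M.mulVec ψ := by rw [hM.eq]
  refine ⟨hi j, hii, fun ψ₀ _ => ?_⟩
  have hGj := hreal (G j) (hGherm j) ψ₀
  have hGk := hreal (G k) (hGherm k) ψ₀
  have hGG := hreal (G j * G k) hGGherm ψ₀
  constructor
  · rw [hii, hjU, hi k]
    have hre : ((star ψ₀ ⬝ᵥ (G j * G k).mulVec ψ₀).re : ℂ)
        = star ψ₀ ⬝ᵥ (G j * G k).mulVec ψ₀ := by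
      apply Complex.ext <;> simp [hGG]
    rw [hre]
    have e1 : star ψ₀ ⬝ᵥ (Complex.I • G j).mulVec ψ₀
        = Complex.I * (star ψ₀ ⬝ᵥ (G j).mulVec ψ₀) := by
      rw [Matrix.smul_mulVec, dotProduct_smul, smul_eq_mul]
    have e2 : star ψ₀ ⬝ᵥ ((-Complex.I) • G k).mulVec ψ₀
        = -Complex.I * (star ψ₀ ⬝ᵥ (G k).mulVec ψ₀) := by
      rw [Matrix.smul_mulVec, dotProduct_smul, smul_eq_mul]
    rw [e1, e2]
    ring_nf
    rw [Complex.I_sq]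
    ring
  · simp [Complex.sub_im, Complex.mul_im, hGj, hGk, hGG]
end

section
/- Let G, H, W, W̃ be d×d complex matrices with G Hermitian, and let g ∈ {0,1}. Suppose W G = G W̃ and G H = (−1)^g H G. Set O = i^g G H and W′ = i^{1−g} W. Then the operator identity i G W* H W − i W* H W G = W̃* O W′ + (W′)* O W̃ holds, where M* denotes the conjugate transpose. -/
open scoped Matrix

/-- Let G, H, W, Wt (= W̃) be d×d matrices with G Hermitian,
g ∈ {0,1}, W G = G Wt and G H = (−1)^g H G. With O = i^g G H and
W′ = i^{1−g} W we have i G W* H W − i W* H W G = Wt* O W′ + (W′)* O Wt. -/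
theorem stmt_8 {d : ℕ} (G H W Wt : Matrix (Fin d) (Fin d) ℂ)
    (hG : G.IsHermitian) (g : ℕ) (hg : g = 0 ∨ g = 1)
    (hWG : W * G = G * Wt)
    (hGH : G * H = (-1 : ℂ) ^ g • (H * G)) :
    Complex.I • (G * Wᴴ * H * W) - Complex.I • (Wᴴ * H * W * G)
      = Wtᴴ * (Complex.I ^ g • (G * H)) * (Complex.I ^ (1 - g) • W)
        + (Complex.I ^ (1 - g) • W)ᴴ * (Complex.I ^ g • (G * H)) * Wt := by
  have hGW : G * Wᴴ = Wtᴴ * G := by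
    have := congrArg Matrix.conjTranspose hWG
    simpa [Matrix.conjTranspose_mul, hG.eq] using this
  have h1 : G * Wᴴ * H * W = Wtᴴ * (G * H) * W := by
    rw [hGW]; noncomm_ring
  have h2 : Wᴴ * H * W * G = Wᴴ * (H * G) * Wt := by
    rw [mul_assoc, mul_assoc, hWG]; noncomm_ring
  rcases hg with hg | hg <;> subst hg <;>
    simp only [pow_zero, pow_one, one_smul, Matrix.conjTranspose_smul,
      Matrix.mul_smul, Matrix.smul_mul, h1, h2, smul_smul, Complex.star_def,
      Complex.conj_I, neg_smul, Complex.I_mul_I]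
  · rw [hGH]; simp [sub_eq_add_neg]
  · rw [hGH]; simp [Matrix.mul_smul, mul_assoc]
    simp [sub_eq_add_neg]
end

section
/- Fix N ≥ 1 and let G = G₁ ⊗ ⋯ ⊗ G_N and H = H₁ ⊗ ⋯ ⊗ H_N be 2^N × 2^N matrices with each G_r, H_r ∈ {X, Y}, such that the number of indices r with G_r = Y is odd and the number of indices r with H_r = Y is even. Let a = #{r : G_r = X and H_r = Y} and b = #{r : G_r = Y and H_r = X}. Then a + b is odd, G and H anticommute (GH = −HG), and iGH = i^{a−b+1} ⊗_{r=1}^N (Z if G_r ≠ H_r, I otherwise), where i^{a−b+1} ∈ {1, −1}. In particular, iGH is a Hermitian diagonal matrix. -/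
open scoped Matrix

namespace Stmt12

noncomputable def X : Matrix (Fin 2) (Fin 2) ℂ := !![0, 1; 1, 0]
noncomputable def Y : Matrix (Fin 2) (Fin 2) ℂ := !![0, -Complex.I; Complex.I, 0]
noncomputable def Z : Matrix (Fin 2) (Fin 2) ℂ := !![1, 0; 0, -1]

/-- N-fold tensor (Kronecker) product of 2×2 matrices, acting on ℂ^{2^N} with
coordinates indexed by bit strings `Fin N → Fin 2`. -/
noncomputable def tensorPow (N : ℕ) (f : Fin N → Matrix (Fin 2) (Fin 2) ℂ) :
    Matrix (Fin N → Fin 2) (Fin N → Fin 2) ℂ :=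
  fun x y => ∏ r : Fin N, f r (x r) (y r)

lemma tensorPow_mul (N : ℕ) (f f' : Fin N → Matrix (Fin 2) (Fin 2) ℂ) :
    tensorPow N f * tensorPow N f' = tensorPow N (fun r => f r * f' r) := by
  ext x y
  simp only [Matrix.mul_apply, tensorPow]
  rw [Fintype.prod_sum (fun r j => f r (x r) j * f' r j (y r))]
  simp [← Finset.prod_mul_distrib]

lemma tensorPow_smul (N : ℕ) (c : Fin N → ℂ) (f : Fin N → Matrix (Fin 2) (Fin 2) ℂ) :
    tensorPow N (fun r => c r • f r) = (∏ r, c r) • tensorPow N f := by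
  ext x y
  simp [tensorPow, Finset.prod_mul_distrib]

lemma XX : X * X = 1 := by
  ext i j; fin_cases i <;> fin_cases j <;> simp [X, Matrix.mul_apply, Fin.sum_univ_two]
lemma YY : Y * Y = 1 := by
  ext i j; fin_cases i <;> fin_cases j <;>
    simp [Y, Matrix.mul_apply, Fin.sum_univ_two, Complex.I_mul_I]
lemma XY : X * Y = Complex.I • Z := by
  ext i j; fin_cases i <;> fin_cases j <;>
    simp [X, Y, Z, Matrix.mul_apply, Fin.sum_univ_two]
lemma YX : Y * X = (-Complex.I) • Z := by
  ext i j; fin_cases i <;> fin_cases j <;>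
    simp [X, Y, Z, Matrix.mul_apply, Fin.sum_univ_two]
lemma X_ne_Y : X ≠ Y := by
  intro h
  have := congrFun (congrFun h 0) 1
  simp [X, Y, Complex.ext_iff] at this
open Classical in
lemma key (N : ℕ) (g h : Fin N → Matrix (Fin 2) (Fin 2) ℂ)
    (hgXY : ∀ r, g r = X ∨ g r = Y) (hhXY : ∀ r, h r = X ∨ h r = Y) :
    tensorPow N g * tensorPow N h =
      (Complex.I ^ (Finset.univ.filter fun r => g r = X ∧ h r = Y).card *
        (-Complex.I) ^ (Finset.univ.filter fun r => g r = Y ∧ h r = X).card) •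
      tensorPow N (fun r => if g r ≠ h r then Z else 1) := by
  rw [tensorPow_mul]
  have hfun : (fun r => g r * h r) = fun r =>
      (if g r = X ∧ h r = Y then Complex.I else
        if g r = Y ∧ h r = X then -Complex.I else 1) •
      (if g r ≠ h r then Z else 1) := by
    funext r
    rcases hgXY r with h1 | h1 <;> rcases hhXY r with h2 | h2 <;>
      simp [h1, h2, XX, XY, YX, YY, X_ne_Y, Ne.symm X_ne_Y]
  rw [hfun, tensorPow_smul]
  congr 1
  rw [Finset.prod_ite, Finset.prod_const, Finset.prod_ite, Finset.prod_const,
    Finset.prod_const_one, mul_one, Finset.filter_filter]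
  congr 2
  apply congrArg Finset.card
  apply Finset.filter_congr
  intro r _
  constructor
  · rintro ⟨-, hq⟩; exact hq
  · rintro hq
    refine ⟨?_, hq⟩
    rintro ⟨hx, -⟩
    exact X_ne_Y (hx.symm.trans hq.1)
open Classical in
lemma count_split (N : ℕ) (g h : Fin N → Matrix (Fin 2) (Fin 2) ℂ)
    (hhXY : ∀ r, h r = X ∨ h r = Y) :
    (Finset.univ.filter fun r => g r = Y).card =
      (Finset.univ.filter fun r => g r = Y ∧ h r = X).card +
      (Finset.univ.filter fun r => g r = Y ∧ h r = Y).card := by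
  rw [← Finset.card_union_of_disjoint, ← Finset.filter_or]
  · apply congrArg Finset.card
    apply Finset.filter_congr
    intro r _
    rcases hhXY r with h2 | h2 <;> simp [h2] <;> tauto
  · rw [Finset.disjoint_left]
    rintro r hr1 hr2
    simp only [Finset.mem_filter] at hr1 hr2
    exact X_ne_Y (hr1.2.2.symm.trans hr2.2.2)

lemma hIpow (p q : ℕ) :
    Complex.I ^ p * (-Complex.I) ^ q = Complex.I ^ ((p : ℤ) - q) := by
  rw [zpow_sub₀ Complex.I_ne_zero, zpow_natCast, zpow_natCast, div_eq_mul_inv,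
    ← inv_pow, Complex.inv_I]

lemma hI4 (t : ℤ) : Complex.I ^ (4 * t) = 1 := by
  rw [zpow_mul, show (4:ℤ) = ((4:ℕ):ℤ) by norm_num, zpow_natCast,
    Complex.I_pow_four, one_zpow]

lemma hI4' (t : ℤ) : Complex.I ^ (4 * t + 2) = -1 := by
  rw [zpow_add₀ Complex.I_ne_zero, hI4, one_mul,
    show (2:ℤ) = ((2:ℕ):ℤ) by norm_num, zpow_natCast, Complex.I_sq]
open Classical in
lemma T_conj (N : ℕ) (g h : Fin N → Matrix (Fin 2) (Fin 2) ℂ) (x y : Fin N → Fin 2) :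
    (starRingEnd ℂ) ((tensorPow N fun r => if g r ≠ h r then Z else 1) x y) =
      (tensorPow N fun r => if g r ≠ h r then Z else 1) y x := by
  simp only [tensorPow, map_prod]
  apply Finset.prod_congr rfl
  intro r _
  generalize x r = i
  generalize y r = j
  by_cases hr : g r ≠ h r <;> fin_cases i <;> fin_cases j <;>
    simp [hr, Z, Matrix.one_apply]

open Classical in
lemma T_offdiag (N : ℕ) (g h : Fin N → Matrix (Fin 2) (Fin 2) ℂ) (x y : Fin N → Fin 2)
    (hxy : x ≠ y) :
    (tensorPow N fun r => if g r ≠ h r then Z else 1) x y = 0 := by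
  obtain ⟨r, hr⟩ := Function.ne_iff.mp hxy
  apply Finset.prod_eq_zero (Finset.mem_univ r)
  revert hr
  generalize x r = i
  generalize y r = j
  intro hij
  by_cases hgr : g r ≠ h r <;> fin_cases i <;> fin_cases j <;>
    simp_all [Z, Matrix.one_apply]

open Classical in
/-- For G = ⊗ᵣ Gᵣ with Gᵣ ∈ {X,Y} and an odd number of Y's, and
H = ⊗ᵣ Hᵣ with Hᵣ ∈ {X,Y} and an even number of Y's, letting
a = #{r : Gᵣ = X, Hᵣ = Y} and b = #{r : Gᵣ = Y, Hᵣ = X}: a + b is odd, G and H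
anticommute, and iGH = i^{a−b+1} ⊗ᵣ (Z if Gᵣ ≠ Hᵣ else I) with
i^{a−b+1} ∈ {1,−1}; in particular iGH is a Hermitian diagonal matrix. -/
theorem stmt_12 (N : ℕ) (hN : 1 ≤ N)
    (g h : Fin N → Matrix (Fin 2) (Fin 2) ℂ)
    (hgXY : ∀ r, g r = X ∨ g r = Y) (hhXY : ∀ r, h r = X ∨ h r = Y)
    (hgodd : Odd (Finset.univ.filter fun r => g r = Y).card)
    (hheven : Even (Finset.univ.filter fun r => h r = Y).card)
    (a b : ℕ)
    (ha : a = (Finset.univ.filter fun r => g r = X ∧ h r = Y).card)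
    (hb : b = (Finset.univ.filter fun r => g r = Y ∧ h r = X).card) :
    Odd (a + b) ∧
    tensorPow N g * tensorPow N h = -(tensorPow N h * tensorPow N g) ∧
    Complex.I • (tensorPow N g * tensorPow N h)
      = Complex.I ^ ((a : ℤ) - b + 1) •
          tensorPow N (fun r => if g r ≠ h r then Z else 1) ∧
    (Complex.I ^ ((a : ℤ) - b + 1) = 1 ∨ Complex.I ^ ((a : ℤ) - b + 1) = -1) ∧
    (Complex.I • (tensorPow N g * tensorPow N h)).IsHermitian ∧
    (∀ x y : Fin N → Fin 2, x ≠ y →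
      (Complex.I • (tensorPow N g * tensorPow N h)) x y = 0) := by
  set T := tensorPow N (fun r => if g r ≠ h r then Z else 1) with hT
  -- counting
  have hcount_g := count_split N g h hhXY
  have hcount_h := count_split N h g hgXY
  have hswap1 : (Finset.univ.filter fun r => h r = Y ∧ g r = X).card = a := by
    rw [ha]; apply congrArg Finset.card; apply Finset.filter_congr; intro r _; tauto
  have hswap2 : (Finset.univ.filter fun r => h r = Y ∧ g r = Y).card =
      (Finset.univ.filter fun r => g r = Y ∧ h r = Y).card := by
    apply congrArg Finset.card; apply Finset.filter_congr; intro r _; tauto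
  obtain ⟨m, hm⟩ := hgodd
  obtain ⟨n, hn⟩ := hheven
  rw [hm, ← hb] at hcount_g
  rw [hn, hswap1, hswap2] at hcount_h
  have hab : Odd (a + b) := by
    rw [Nat.odd_iff]; omega
  -- products
  have hGH : tensorPow N g * tensorPow N h = Complex.I ^ ((a:ℤ) - b) • T := by
    rw [key N g h hgXY hhXY, ← ha, ← hb, hIpow]
  have hswap3 : (Finset.univ.filter fun r => h r = X ∧ g r = Y).card = b := by
    rw [hb]; apply congrArg Finset.card; apply Finset.filter_congr; intro r _; tauto
  have hswap4 : (Finset.univ.filter fun r => h r = Y ∧ g r = X).card = a := hswap1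
  have hTsymm : tensorPow N (fun r => if h r ≠ g r then Z else 1) = T := by
    rw [hT]; exact congrArg (tensorPow N) (funext fun r => if_congr ne_comm rfl rfl)
  have hHG : tensorPow N h * tensorPow N g = Complex.I ^ ((b:ℤ) - a) • T := by
    rw [key N h g hhXY hgXY, hswap3, hswap4, hIpow, hTsymm]
  -- scalar facts
  obtain ⟨k, hk⟩ := id hab
  have hcd : Complex.I ^ ((a:ℤ) - b) * Complex.I ^ ((b:ℤ) - a) = 1 := by
    rw [← zpow_add₀ Complex.I_ne_zero, show (a:ℤ) - b + ((b:ℤ) - a) = 0 by ring, zpow_zero]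
  have hcc : Complex.I ^ ((a:ℤ) - b) * Complex.I ^ ((a:ℤ) - b) = -1 := by
    rw [← zpow_add₀ Complex.I_ne_zero,
      show (a:ℤ) - b + ((a:ℤ) - b) = 4 * ((k:ℤ) - b) + 2 by push_cast; omega, hI4']
  have hanti : Complex.I ^ ((a:ℤ) - b) = -Complex.I ^ ((b:ℤ) - a) := by
    have h0 : Complex.I ^ ((a:ℤ) - b) * (Complex.I ^ ((a:ℤ) - b) + Complex.I ^ ((b:ℤ) - a)) = 0 := by
      rw [mul_add, hcc, hcd]; ring
    have hne : Complex.I ^ ((a:ℤ) - b) ≠ 0 := zpow_ne_zero _ Complex.I_ne_zero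
    have := (mul_eq_zero.mp h0).resolve_left hne
    linear_combination this
  -- third claim
  have hIGH : Complex.I • (tensorPow N g * tensorPow N h)
      = Complex.I ^ ((a:ℤ) - b + 1) • T := by
    rw [hGH, smul_smul, zpow_add₀ Complex.I_ne_zero, zpow_one, mul_comm]
  -- sign claim
  have hsign : Complex.I ^ ((a:ℤ) - b + 1) = 1 ∨ Complex.I ^ ((a:ℤ) - b + 1) = -1 := by
    rcases Int.even_or_odd ((k:ℤ) + 1 - b) with ⟨v, hv⟩ | ⟨v, hv⟩
    · left
      rw [show (a:ℤ) - b + 1 = 4 * v by push_cast at hv ⊢; omega, hI4]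
    · right
      rw [show (a:ℤ) - b + 1 = 4 * v + 2 by push_cast at hv ⊢; omega, hI4']
  refine ⟨hab, ?_, hIGH, hsign, ?_, ?_⟩
  · rw [hGH, hHG, hanti, neg_smul]
  · -- Hermitian
    have hstar : (starRingEnd ℂ) (Complex.I ^ ((a:ℤ) - b + 1)) = Complex.I ^ ((a:ℤ) - b + 1) := by
      rcases hsign with hs | hs <;> rw [hs] <;> simp
    show (Complex.I • (tensorPow N g * tensorPow N h))ᴴ = _
    rw [hIGH]
    ext x y
    simp only [Matrix.conjTranspose_apply, Matrix.smul_apply, smul_eq_mul, star_mul',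
      RingHom.coe_coe]
    rw [show (star (Complex.I ^ ((a:ℤ) - b + 1)) : ℂ) = Complex.I ^ ((a:ℤ) - b + 1) from hstar]
    congr 1
    exact T_conj N g h y x
  · intro x y hxy
    rw [hIGH, hT]
    simp only [Matrix.smul_apply, smul_eq_mul]
    rw [T_offdiag N g h x y hxy, mul_zero]

end Stmt12
end

section
/- Fix N ≥ 1 and work inside the real Lie algebra of 2^N × 2^N complex matrices with bracket [A,B] = AB − BA. Let 𝒵 = {iP : P = P₁ ⊗ ⋯ ⊗ P_N with each P_r ∈ {I, Z} and the number of Z factors odd} and let A = 𝒵 ∪ {i X^{⊗N}}. Then the smallest real Lie subalgebra containing A equals the real span of 𝒵 ∪ {iQ : Q = Q₁ ⊗ ⋯ ⊗ Q_N with each Q_r ∈ {X, Y}}, and this Lie algebra has real dimension 2^{N−1} + 2^N = (3/2)·2^N. -/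
open scoped Matrix

open scoped symmDiff

namespace Stmt15

attribute [local instance 100] LieRing.ofAssociativeRing

noncomputable def X : Matrix (Fin 2) (Fin 2) ℂ := !![0, 1; 1, 0]
noncomputable def Y : Matrix (Fin 2) (Fin 2) ℂ := !![0, -Complex.I; Complex.I, 0]
noncomputable def Z : Matrix (Fin 2) (Fin 2) ℂ := !![1, 0; 0, -1]

/-- N-fold tensor (Kronecker) product of 2×2 matrices, acting on ℂ^{2^N} with
coordinates indexed by bit strings `Fin N → Fin 2`. -/
noncomputable def tensorPow (N : ℕ) (f : Fin N → Matrix (Fin 2) (Fin 2) ℂ) :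
    Matrix (Fin N → Fin 2) (Fin N → Fin 2) ℂ :=
  fun x y => ∏ r : Fin N, f r (x r) (y r)

/-- 𝒵: i times the Pauli words in {I,Z}^{⊗N} with an odd number of Z factors. -/
noncomputable def oddZWords (N : ℕ) : Set (Matrix (Fin N → Fin 2) (Fin N → Fin 2) ℂ) :=
  (fun S : Finset (Fin N) =>
      Complex.I • tensorPow N fun r => if r ∈ S then Z else 1) ''
    {S | Odd S.card}

/-- i times the full-weight Pauli words in {X,Y}^{⊗N} (S = positions of Y). -/
noncomputable def xyWords (N : ℕ) : Set (Matrix (Fin N → Fin 2) (Fin N → Fin 2) ℂ) :=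
  Set.range fun S : Finset (Fin N) =>
    Complex.I • tensorPow N fun r => if r ∈ S then Y else X

-- abbreviations
noncomputable def zw (N : ℕ) (S : Finset (Fin N)) : Matrix (Fin N → Fin 2) (Fin N → Fin 2) ℂ :=
  Complex.I • tensorPow N fun r => if r ∈ S then Z else 1

noncomputable def ww (N : ℕ) (T : Finset (Fin N)) : Matrix (Fin N → Fin 2) (Fin N → Fin 2) ℂ :=
  Complex.I • tensorPow N fun r => if r ∈ T then Y else X

lemma oddZWords_eq (N : ℕ) : oddZWords N = zw N '' {S | Odd S.card} := rfl
lemma xyWords_eq (N : ℕ) : xyWords N = Set.range (ww N) := rfl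

-- 2x2 letter product lemmas
lemma mulXX : X * X = 1 := by
  ext i j; fin_cases i <;> fin_cases j <;>
    simp [X, Matrix.mul_apply, Fin.sum_univ_two, Matrix.one_apply]

lemma mulYY : Y * Y = 1 := by
  ext i j; fin_cases i <;> fin_cases j <;>
    simp [Y, Matrix.mul_apply, Fin.sum_univ_two, Matrix.one_apply, Complex.I_mul_I]

lemma mulXY : X * Y = Complex.I • Z := by
  ext i j; fin_cases i <;> fin_cases j <;>
    simp [X, Y, Z, Matrix.mul_apply, Fin.sum_univ_two]

lemma mulYX : Y * X = (-Complex.I) • Z := by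
  ext i j; fin_cases i <;> fin_cases j <;>
    simp [X, Y, Z, Matrix.mul_apply, Fin.sum_univ_two]

lemma mulZX : Z * X = Complex.I • Y := by
  ext i j; fin_cases i <;> fin_cases j <;>
    simp [X, Y, Z, Matrix.mul_apply, Fin.sum_univ_two, Complex.I_mul_I]

lemma mulXZ : X * Z = (-Complex.I) • Y := by
  ext i j; fin_cases i <;> fin_cases j <;>
    simp [X, Y, Z, Matrix.mul_apply, Fin.sum_univ_two, Complex.I_mul_I]

lemma mulZY : Z * Y = (-Complex.I) • X := by
  ext i j; fin_cases i <;> fin_cases j <;>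
    simp [X, Y, Z, Matrix.mul_apply, Fin.sum_univ_two]

lemma mulYZ : Y * Z = Complex.I • X := by
  ext i j; fin_cases i <;> fin_cases j <;>
    simp [X, Y, Z, Matrix.mul_apply, Fin.sum_univ_two]

lemma mulZZ : Z * Z = 1 := by
  ext i j; fin_cases i <;> fin_cases j <;>
    simp [Z, Matrix.mul_apply, Fin.sum_univ_two, Matrix.one_apply]

-- tensorPow lemmas
lemma tensorPow_mul (N : ℕ) (f g : Fin N → Matrix (Fin 2) (Fin 2) ℂ) :
    tensorPow N f * tensorPow N g = tensorPow N (fun r => f r * g r) := by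
  ext x y
  simp only [tensorPow, Matrix.mul_apply]
  rw [Fintype.prod_sum (fun r j => f r (x r) j * g r j (y r))]
  exact Finset.sum_congr rfl fun z _ => Finset.prod_mul_distrib.symm

lemma tensorPow_smul (N : ℕ) (c : Fin N → ℂ) (g : Fin N → Matrix (Fin 2) (Fin 2) ℂ) :
    tensorPow N (fun r => c r • g r) = (∏ r, c r) • tensorPow N g := by
  ext x y
  simp [tensorPow, Finset.prod_mul_distrib, Matrix.smul_apply, smul_eq_mul]


-- phase product
lemma phase_prod {N : ℕ} (A B : Finset (Fin N)) (hAB : Disjoint A B) (u v : ℂ) :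
    (∏ r : Fin N, (if r ∈ A then u else if r ∈ B then v else 1))
      = u ^ A.card * v ^ B.card := by
  have h : ∀ r : Fin N, (if r ∈ A then u else if r ∈ B then v else 1)
      = (if r ∈ A then u else 1) * (if r ∈ B then v else 1) := by
    intro r
    by_cases hA : r ∈ A
    · have hB : r ∉ B := Finset.disjoint_left.mp hAB hA
      simp [hA, hB]
    · by_cases hB : r ∈ B <;> simp [hA, hB]
  simp only [h]
  rw [Finset.prod_mul_distrib, Finset.prod_ite_mem, Finset.prod_ite_mem,
    Finset.prod_const, Finset.prod_const, Finset.univ_inter, Finset.univ_inter]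

-- word product lemmas
lemma mulZW {N : ℕ} (S T : Finset (Fin N)) :
    (tensorPow N fun r => if r ∈ S then Z else 1)
        * (tensorPow N fun r => if r ∈ T then Y else X)
      = ((-Complex.I) ^ (S ∩ T).card * Complex.I ^ (S \ T).card) •
          tensorPow N (fun r => if r ∈ S ∆ T then Y else X) := by
  rw [tensorPow_mul]
  have h : (fun r : Fin N => (if r ∈ S then Z else 1) * (if r ∈ T then Y else X))
      = fun r => (if r ∈ S ∩ T then -Complex.I else if r ∈ S \ T then Complex.I else 1)
          • (if r ∈ S ∆ T then Y else X) := by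
    funext r
    by_cases hS : r ∈ S <;> by_cases hT : r ∈ T <;>
      simp [hS, hT, Finset.mem_symmDiff, mulZY, mulZX]
  rw [h, tensorPow_smul, phase_prod _ _ ((Finset.disjoint_sdiff_inter S T).symm)]


lemma mulWZ {N : ℕ} (S T : Finset (Fin N)) :
    (tensorPow N fun r => if r ∈ T then Y else X)
        * (tensorPow N fun r => if r ∈ S then Z else 1)
      = (Complex.I ^ (S ∩ T).card * (-Complex.I) ^ (S \ T).card) •
          tensorPow N (fun r => if r ∈ S ∆ T then Y else X) := by
  rw [tensorPow_mul]
  have h : (fun r : Fin N => (if r ∈ T then Y else X) * (if r ∈ S then Z else 1))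
      = fun r => (if r ∈ S ∩ T then Complex.I else if r ∈ S \ T then -Complex.I else 1)
          • (if r ∈ S ∆ T then Y else X) := by
    funext r
    by_cases hS : r ∈ S <;> by_cases hT : r ∈ T <;>
      simp [hS, hT, Finset.mem_symmDiff, mulYZ, mulXZ]
  rw [h, tensorPow_smul, phase_prod _ _ ((Finset.disjoint_sdiff_inter S T).symm)]

lemma mulWW {N : ℕ} (T T' : Finset (Fin N)) :
    (tensorPow N fun r => if r ∈ T then Y else X)
        * (tensorPow N fun r => if r ∈ T' then Y else X)
      = ((-Complex.I) ^ (T \ T').card * Complex.I ^ (T' \ T).card) •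
          tensorPow N (fun r => if r ∈ T ∆ T' then Z else 1) := by
  rw [tensorPow_mul]
  have h : (fun r : Fin N => (if r ∈ T then Y else X) * (if r ∈ T' then Y else X))
      = fun r => (if r ∈ T \ T' then -Complex.I else if r ∈ T' \ T then Complex.I else 1)
          • (if r ∈ T ∆ T' then Z else 1) := by
    funext r
    by_cases hT : r ∈ T <;> by_cases hT' : r ∈ T' <;>
      simp [hT, hT', Finset.mem_symmDiff, mulYY, mulXX, mulYX, mulXY]
  rw [h, tensorPow_smul, phase_prod _ _ disjoint_sdiff_sdiff]

lemma mulZZcomm {N : ℕ} (S S' : Finset (Fin N)) :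
    (tensorPow N fun r => if r ∈ S then Z else 1)
        * (tensorPow N fun r => if r ∈ S' then Z else 1)
      = (tensorPow N fun r => if r ∈ S' then Z else 1)
        * (tensorPow N fun r => if r ∈ S then Z else 1) := by
  rw [tensorPow_mul, tensorPow_mul]
  have h : (fun r : Fin N => (if r ∈ S then Z else 1) * (if r ∈ S' then Z else 1))
      = fun r : Fin N => (if r ∈ S' then Z else 1) * (if r ∈ S then Z else 1) := by
    funext r
    by_cases hS : r ∈ S <;> by_cases hS' : r ∈ S' <;> simp [hS, hS']
  rw [h]

-- scalar identities
lemma neg_one_pow_flip {a b m : ℕ} (hab : a + b = 2 * m + 1) :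
    ((-1 : ℂ)) ^ b = -(-1 : ℂ) ^ a := by
  have h2 : ((-1 : ℂ)) ^ a * (-1) ^ b = -1 := by
    rw [← pow_add, hab, pow_succ, pow_mul]; simp
  have ha2 : ((-1 : ℂ)) ^ a * (-1) ^ a = 1 := by
    rw [← pow_add, ← two_mul, pow_mul]; simp
  linear_combination ((-1 : ℂ)) ^ a * h2 - ((-1 : ℂ)) ^ b * ha2

lemma scalar_key {a b m : ℕ} (hab : a + b = 2 * m + 1) :
    (Complex.I * Complex.I) * ((-Complex.I) ^ a * Complex.I ^ b
        - Complex.I ^ a * (-Complex.I) ^ b)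
      = ((((-2 : ℝ)) * (-1 : ℝ) ^ (a + m) : ℝ) : ℂ) * Complex.I := by
  have hI : (Complex.I) ^ (a + b) = (-1 : ℂ) ^ m * Complex.I := by
    rw [hab, pow_succ, pow_mul, Complex.I_sq]
  have hb := neg_one_pow_flip hab
  have e1 : (-Complex.I) ^ a = (-1 : ℂ) ^ a * Complex.I ^ a := neg_pow _ _
  have e2 : (-Complex.I) ^ b = (-1 : ℂ) ^ b * Complex.I ^ b := neg_pow _ _
  have hII : Complex.I ^ a * Complex.I ^ b = (-1 : ℂ) ^ m * Complex.I := by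
    rw [← pow_add]; exact hI
  push_cast
  calc (Complex.I * Complex.I) * ((-Complex.I) ^ a * Complex.I ^ b
        - Complex.I ^ a * (-Complex.I) ^ b)
      = -(((-1:ℂ))^a - (-1:ℂ)^b) * (Complex.I ^ a * Complex.I ^ b) := by
        rw [e1, e2, Complex.I_mul_I]; ring
    _ = ((((-2 : ℂ)) * (-1 : ℂ) ^ (a + m))) * Complex.I := by
        rw [hb, hII, pow_add]; ring

lemma scalar_zero {a b : ℕ} (hab : Even (a + b)) :
    ((-Complex.I) ^ a * Complex.I ^ b - Complex.I ^ a * (-Complex.I) ^ b) = 0 := by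
  have e1 : (-Complex.I) ^ a = (-1 : ℂ) ^ a * Complex.I ^ a := neg_pow _ _
  have e2 : (-Complex.I) ^ b = (-1 : ℂ) ^ b * Complex.I ^ b := neg_pow _ _
  have hb : ((-1 : ℂ)) ^ b = (-1 : ℂ) ^ a := by
    have h2 : ((-1 : ℂ)) ^ a * (-1) ^ b = 1 := by rw [← pow_add, hab.neg_one_pow]
    have ha2 : ((-1 : ℂ)) ^ a * (-1) ^ a = 1 := by
      rw [← pow_add, ← two_mul, pow_mul]; simp
    linear_combination ((-1 : ℂ)) ^ a * h2 - ((-1 : ℂ)) ^ b * ha2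
  rw [e1, e2, hb]; ring


lemma card_symmDiff' {N : ℕ} (T T' : Finset (Fin N)) :
    (T ∆ T').card = (T \ T').card + (T' \ T).card := by
  have h : T ∆ T' = (T \ T') ∪ (T' \ T) := by
    ext x; simp [Finset.mem_symmDiff, Finset.mem_union, Finset.mem_sdiff]
  rw [h, Finset.card_union_of_disjoint disjoint_sdiff_sdiff]

lemma brZZ {N : ℕ} (S S' : Finset (Fin N)) : ⁅zw N S, zw N S'⁆ = 0 := by
  rw [Ring.lie_def]
  unfold zw
  rw [smul_mul_assoc, smul_mul_assoc, mul_smul_comm, mul_smul_comm, mulZZcomm S S', sub_self]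

lemma brZW {N : ℕ} (S T : Finset (Fin N)) (hS : Odd S.card) :
    ∃ c : ℝ, c ≠ 0 ∧ ⁅zw N S, ww N T⁆ = c • ww N (S ∆ T) := by
  obtain ⟨m, hm⟩ := hS
  have hab : (S ∩ T).card + (S \ T).card = 2 * m + 1 := by
    rw [Finset.card_inter_add_card_sdiff]; omega
  refine ⟨(-2 : ℝ) * (-1 : ℝ) ^ ((S ∩ T).card + m),
    mul_ne_zero (by norm_num) (pow_ne_zero _ (by norm_num)), ?_⟩
  rw [Ring.lie_def]
  unfold zw ww
  rw [smul_mul_assoc, smul_mul_assoc, mul_smul_comm, mul_smul_comm, mulZW, mulWZ,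
    smul_smul, smul_smul, smul_smul, smul_smul, ← sub_smul,
    ← smul_assoc, Complex.real_smul]
  congr 1
  have := scalar_key hab
  linear_combination this

lemma brWW_even {N : ℕ} (T T' : Finset (Fin N)) (h : Even ((T ∆ T').card)) :
    ⁅ww N T, ww N T'⁆ = 0 := by
  rw [Ring.lie_def]
  unfold ww
  rw [smul_mul_assoc, smul_mul_assoc, mul_smul_comm, mul_smul_comm, mulWW, mulWW,
    symmDiff_comm T' T,
    smul_smul, smul_smul, smul_smul, smul_smul, ← sub_smul]
  rw [card_symmDiff'] at h
  have h0 := scalar_zero h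
  have : Complex.I * Complex.I * ((-Complex.I) ^ (T \ T').card * Complex.I ^ (T' \ T).card)
      - Complex.I * Complex.I * ((-Complex.I) ^ (T' \ T).card * Complex.I ^ (T \ T').card) = 0 := by
    linear_combination (Complex.I * Complex.I) * h0
  rw [this, zero_smul]

lemma brWW_odd {N : ℕ} (T T' : Finset (Fin N)) (h : Odd ((T ∆ T').card)) :
    ∃ c : ℝ, ⁅ww N T, ww N T'⁆ = c • zw N (T ∆ T') := by
  rw [card_symmDiff'] at h
  obtain ⟨m, hm⟩ := h
  refine ⟨(-2 : ℝ) * (-1 : ℝ) ^ ((T \ T').card + m), ?_⟩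
  rw [Ring.lie_def]
  unfold ww zw
  rw [smul_mul_assoc, smul_mul_assoc, mul_smul_comm, mul_smul_comm, mulWW, mulWW,
    symmDiff_comm T' T,
    smul_smul, smul_smul, smul_smul, smul_smul, ← sub_smul,
    ← smul_assoc, Complex.real_smul]
  congr 1
  have hab : (T \ T').card + (T' \ T).card = 2 * m + 1 := hm
  have := scalar_key hab
  linear_combination this


-- pairing
noncomputable def pairingMap {N : ℕ} (B : Matrix (Fin N → Fin 2) (Fin N → Fin 2) ℂ) :
    Matrix (Fin N → Fin 2) (Fin N → Fin 2) ℂ →ₗ[ℝ] ℂ where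
  toFun A := ∑ x, ∑ y, (starRingEnd ℂ) (B x y) * A x y
  map_add' A A' := by
    simp [Matrix.add_apply, mul_add, Finset.sum_add_distrib]
  map_smul' r A := by
    simp only [Matrix.smul_apply, Complex.real_smul, RingHom.id_apply, smul_eq_mul]
    rw [Finset.mul_sum]
    refine Finset.sum_congr rfl fun x _ => ?_
    rw [Finset.mul_sum]
    refine Finset.sum_congr rfl fun y _ => ?_
    ring

lemma sum_prod_fun {N : ℕ} (G : Fin N → Fin 2 → ℂ) :
    ∑ x : Fin N → Fin 2, ∏ r, G r (x r) = ∏ r, ∑ s, G r s :=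
  (Fintype.prod_sum _).symm

noncomputable def pair2 (p q : Matrix (Fin 2) (Fin 2) ℂ) : ℂ :=
  ∑ s : Fin 2, ∑ t : Fin 2, (starRingEnd ℂ) (p s t) * q s t

lemma pairing_tensor {N : ℕ} (f g : Fin N → Matrix (Fin 2) (Fin 2) ℂ) :
    pairingMap (Complex.I • tensorPow N f) (Complex.I • tensorPow N g)
      = ∏ r, pair2 (f r) (g r) := by
  show (∑ x, ∑ y, (starRingEnd ℂ) ((Complex.I • tensorPow N f) x y)
      * ((Complex.I • tensorPow N g) x y)) = _
  have key : ∀ x y : Fin N → Fin 2,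
      (starRingEnd ℂ) ((Complex.I • tensorPow N f) x y) * ((Complex.I • tensorPow N g) x y)
        = ∏ r, ((starRingEnd ℂ) (f r (x r) (y r)) * g r (x r) (y r)) := by
    intro x y
    simp only [Matrix.smul_apply, smul_eq_mul, map_mul, tensorPow, map_prod, Complex.conj_I]
    rw [Finset.prod_mul_distrib]
    have hI : -Complex.I * Complex.I = 1 := by
      rw [neg_mul, Complex.I_mul_I, neg_neg]
    linear_combination (∏ r, (starRingEnd ℂ) (f r (x r) (y r)))
      * (∏ r, g r (x r) (y r)) * hI
  simp only [key]
  have step1 : ∀ x : Fin N → Fin 2,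
      ∑ y : Fin N → Fin 2, ∏ r, ((starRingEnd ℂ) (f r (x r) (y r)) * g r (x r) (y r))
        = ∏ r, ∑ t, (starRingEnd ℂ) (f r (x r) t) * g r (x r) t :=
    fun x => sum_prod_fun (fun r t => (starRingEnd ℂ) (f r (x r) t) * g r (x r) t)
  simp only [step1]
  rw [sum_prod_fun (fun r s => ∑ t, (starRingEnd ℂ) (f r s t) * g r s t)]
  rfl


section table
set_option maxHeartbeats 1000000

lemma pair2_II : pair2 1 1 = 2 := by
  simp [pair2, Fin.sum_univ_two, Matrix.one_apply]
lemma pair2_ZZ : pair2 Z Z = 2 := by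
  simp [pair2, Z, Fin.sum_univ_two]; norm_num
lemma pair2_IZ : pair2 1 Z = 0 := by
  simp [pair2, Z, Fin.sum_univ_two, Matrix.one_apply]
lemma pair2_ZI : pair2 Z 1 = 0 := by
  simp [pair2, Z, Fin.sum_univ_two, Matrix.one_apply]
lemma pair2_XX : pair2 X X = 2 := by
  simp [pair2, X, Fin.sum_univ_two]; norm_num
lemma pair2_YY : pair2 Y Y = 2 := by
  simp [pair2, Y, Fin.sum_univ_two, Complex.conj_I]; norm_num
lemma pair2_XY : pair2 X Y = 0 := by
  simp [pair2, X, Y, Fin.sum_univ_two]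
lemma pair2_YX : pair2 Y X = 0 := by
  simp [pair2, X, Y, Fin.sum_univ_two, Complex.conj_I]
lemma pair2_IX : pair2 1 X = 0 := by
  simp [pair2, X, Fin.sum_univ_two, Matrix.one_apply]
lemma pair2_IY : pair2 1 Y = 0 := by
  simp [pair2, Y, Fin.sum_univ_two, Matrix.one_apply]
lemma pair2_ZX : pair2 Z X = 0 := by
  simp [pair2, X, Z, Fin.sum_univ_two]
lemma pair2_ZY : pair2 Z Y = 0 := by
  simp [pair2, Y, Z, Fin.sum_univ_two]
lemma pair2_XI : pair2 X 1 = 0 := by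
  simp [pair2, X, Fin.sum_univ_two, Matrix.one_apply]
lemma pair2_XZ : pair2 X Z = 0 := by
  simp [pair2, X, Z, Fin.sum_univ_two]
lemma pair2_YI : pair2 Y 1 = 0 := by
  simp [pair2, Y, Fin.sum_univ_two, Matrix.one_apply]
lemma pair2_YZ : pair2 Y Z = 0 := by
  simp [pair2, Y, Z, Fin.sum_univ_two]

end table


abbrev idx (N : ℕ) := {S : Finset (Fin N) // Odd S.card} ⊕ Finset (Fin N)

noncomputable def letters {N : ℕ} : idx N → Fin N → Matrix (Fin 2) (Fin 2) ℂ :=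
  Sum.elim (fun S r => if r ∈ S.1 then Z else 1) (fun T r => if r ∈ T then Y else X)

noncomputable def vv {N : ℕ} (i : idx N) : Matrix (Fin N → Fin 2) (Fin N → Fin 2) ℂ :=
  Complex.I • tensorPow N (letters i)

lemma vv_inl {N : ℕ} (S : {S : Finset (Fin N) // Odd S.card}) :
    vv (Sum.inl S) = zw N S.1 := rfl
lemma vv_inr {N : ℕ} (T : Finset (Fin N)) : vv (Sum.inr T) = ww N T := rfl

lemma pair_vv {N : ℕ} (hN : 1 ≤ N) (i j : idx N) :
    pairingMap (vv i) (vv j) = if i = j then (2 ^ N : ℂ) else 0 := by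
  rw [vv, vv, pairing_tensor]
  by_cases hij : i = j
  · subst hij
    rw [if_pos rfl]
    have hp : ∀ r, pair2 (letters i r) (letters i r) = 2 := by
      intro r
      rcases i with S | T
      · by_cases h : r ∈ S.1 <;> simp [letters, h, pair2_ZZ, pair2_II]
      · by_cases h : r ∈ T <;> simp [letters, h, pair2_YY, pair2_XX]
    rw [Finset.prod_congr rfl (fun r _ => hp r), Finset.prod_const]
    simp
  · rw [if_neg hij]
    rcases i with S | T <;> rcases j with S' | T'
    · have hne : S.1 ≠ S'.1 := fun h => hij (by rw [Subtype.ext h])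
      obtain ⟨r, hr⟩ : ∃ r, ¬(r ∈ S.1 ↔ r ∈ S'.1) := by
        by_contra hc; push_neg at hc
        exact hne (Finset.ext_iff.mpr fun a => hc a)
      refine Finset.prod_eq_zero (Finset.mem_univ r) ?_
      by_cases h1 : r ∈ S.1 <;> by_cases h2 : r ∈ S'.1
      · exact absurd (iff_of_true h1 h2) hr
      · simp [letters, h1, h2, pair2_ZI]
      · simp [letters, h1, h2, pair2_IZ]
      · exact absurd (iff_of_false h1 h2) hr
    · refine Finset.prod_eq_zero (Finset.mem_univ (⟨0, hN⟩ : Fin N)) ?_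
      by_cases h1 : (⟨0, hN⟩ : Fin N) ∈ S.1 <;> by_cases h2 : (⟨0, hN⟩ : Fin N) ∈ T' <;>
        simp [letters, h1, h2, pair2_ZY, pair2_ZX, pair2_IY, pair2_IX]
    · refine Finset.prod_eq_zero (Finset.mem_univ (⟨0, hN⟩ : Fin N)) ?_
      by_cases h1 : (⟨0, hN⟩ : Fin N) ∈ T <;> by_cases h2 : (⟨0, hN⟩ : Fin N) ∈ S'.1 <;>
        simp [letters, h1, h2, pair2_YZ, pair2_YI, pair2_XZ, pair2_XI]
    · have hne : T ≠ T' := fun h => hij (by rw [h])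
      obtain ⟨r, hr⟩ : ∃ r, ¬(r ∈ T ↔ r ∈ T') := by
        by_contra hc; push_neg at hc
        exact hne (Finset.ext_iff.mpr fun a => hc a)
      refine Finset.prod_eq_zero (Finset.mem_univ r) ?_
      by_cases h1 : r ∈ T <;> by_cases h2 : r ∈ T'
      · exact absurd (iff_of_true h1 h2) hr
      · simp [letters, h1, h2, pair2_YX]
      · simp [letters, h1, h2, pair2_XY]
      · exact absurd (iff_of_false h1 h2) hr

lemma vv_indep {N : ℕ} (hN : 1 ≤ N) : LinearIndependent ℝ (vv (N := N)) := by
  rw [linearIndependent_iff']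
  intro s g hsum i hi
  have h0 := congrArg (pairingMap (vv i)) hsum
  rw [map_sum, map_zero] at h0
  simp only [map_smul, pair_vv hN] at h0
  rw [Finset.sum_eq_single_of_mem i hi
    (fun j _ hji => by rw [if_neg (fun h => hji h.symm), smul_zero]), if_pos rfl] at h0
  rw [Complex.real_smul] at h0
  rcases mul_eq_zero.mp h0 with h | h
  · exact_mod_cast h
  · exact absurd h (pow_ne_zero _ two_ne_zero)


-- counting
lemma symmDiff_singleton_card {N : ℕ} (r₀ : Fin N) (T : Finset (Fin N)) :
    (T ∆ {r₀}).card = if r₀ ∈ T then T.card - 1 else T.card + 1 := by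
  by_cases h : r₀ ∈ T
  · rw [if_pos h]
    have he : T ∆ {r₀} = T.erase r₀ := by
      ext x
      simp only [Finset.mem_symmDiff, Finset.mem_singleton, Finset.mem_erase]
      constructor
      · rintro (⟨hx, hne⟩ | ⟨rfl, hx⟩)
        · exact ⟨hne, hx⟩
        · exact absurd h hx
      · rintro ⟨hne, hx⟩; exact Or.inl ⟨hx, hne⟩
    rw [he, Finset.card_erase_of_mem h]
  · rw [if_neg h]
    have he : T ∆ {r₀} = insert r₀ T := by
      ext x
      simp only [Finset.mem_symmDiff, Finset.mem_singleton, Finset.mem_insert]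
      constructor
      · rintro (⟨hx, _⟩ | ⟨rfl, _⟩)
        · exact Or.inr hx
        · exact Or.inl rfl
      · rintro (rfl | hx)
        · exact Or.inr ⟨rfl, h⟩
        · exact Or.inl ⟨hx, fun he => h (he ▸ hx)⟩
    rw [he, Finset.card_insert_of_notMem h]

lemma odd_flip {N : ℕ} (r₀ : Fin N) (T : Finset (Fin N)) :
    Odd ((T ∆ {r₀}).card) ↔ ¬ Odd T.card := by
  rw [symmDiff_singleton_card, Nat.odd_iff, Nat.odd_iff]
  by_cases h : r₀ ∈ T
  · rw [if_pos h]
    have h1 : 1 ≤ T.card := Finset.card_pos.mpr ⟨r₀, h⟩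
    omega
  · rw [if_neg h]; omega

noncomputable def oddEvenEquiv {N : ℕ} (hN : 1 ≤ N) :
    {S : Finset (Fin N) // Odd S.card} ≃ {S : Finset (Fin N) // ¬ Odd S.card} where
  toFun S := ⟨S.1 ∆ {⟨0, hN⟩}, fun hodd => ((odd_flip _ _).mp hodd) S.2⟩
  invFun S := ⟨S.1 ∆ {⟨0, hN⟩}, (odd_flip _ _).mpr S.2⟩
  left_inv S := Subtype.ext (by show S.1 ∆ _ ∆ _ = S.1; rw [symmDiff_symmDiff_cancel_right])
  right_inv S := Subtype.ext (by show S.1 ∆ _ ∆ _ = S.1; rw [symmDiff_symmDiff_cancel_right])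

lemma card_odd_subtype {N : ℕ} (hN : 1 ≤ N) :
    Fintype.card {S : Finset (Fin N) // Odd S.card} = 2 ^ (N - 1) := by
  have h1 := Fintype.card_congr (oddEvenEquiv hN)
  have h2 := Fintype.card_subtype_compl (fun S : Finset (Fin N) => Odd S.card)
  have h3 : Fintype.card (Finset (Fin N)) = 2 ^ N := by
    rw [Fintype.card_finset, Fintype.card_fin]
  have h4 : 2 ^ N = 2 * 2 ^ (N - 1) := by
    rw [← pow_succ']
    congr 1
    omega
  have h5 : Fintype.card {S : Finset (Fin N) // Odd S.card} ≤ Fintype.card (Finset (Fin N)) :=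
    Fintype.card_subtype_le _
  omega

lemma ww_empty {N : ℕ} : ww N ∅ = Complex.I • tensorPow N fun _ => X := by
  unfold ww
  have h : (fun r : Fin N => if r ∈ (∅ : Finset (Fin N)) then Y else X) = fun _ => X := by
    funext r; simp
  rw [h]

-- the span is a Lie subalgebra
lemma base_bracket {N : ℕ} (x y : Matrix (Fin N → Fin 2) (Fin N → Fin 2) ℂ)
    (hx : x ∈ oddZWords N ∪ xyWords N) (hy : y ∈ oddZWords N ∪ xyWords N) :
    ⁅x, y⁆ ∈ Submodule.span ℝ (oddZWords N ∪ xyWords N) := by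
  rcases hx with ⟨S, hS, rfl⟩ | ⟨T, rfl⟩ <;> rcases hy with ⟨S', hS', rfl⟩ | ⟨T', rfl⟩
  · rw [show (fun S : Finset (Fin N) =>
        Complex.I • tensorPow N fun r => if r ∈ S then Z else 1) = zw N from rfl] at *
    rw [brZZ]
    exact Submodule.zero_mem _
  · obtain ⟨c, _, hb⟩ := brZW S T' hS
    rw [show ⁅(fun S : Finset (Fin N) =>
        Complex.I • tensorPow N fun r => if r ∈ S then Z else 1) S,
        (fun T : Finset (Fin N) =>
        Complex.I • tensorPow N fun r => if r ∈ T then Y else X) T'⁆ = ⁅zw N S, ww N T'⁆ from rfl,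
      hb]
    exact Submodule.smul_mem _ _ (Submodule.subset_span (Or.inr ⟨S ∆ T', rfl⟩))
  · obtain ⟨c, _, hb⟩ := brZW S' T hS'
    have : ⁅ww N T, zw N S'⁆ = -(c • ww N (S' ∆ T)) := by
      rw [← hb, ← lie_skew]
    rw [show ⁅(fun T : Finset (Fin N) =>
        Complex.I • tensorPow N fun r => if r ∈ T then Y else X) T,
        (fun S : Finset (Fin N) =>
        Complex.I • tensorPow N fun r => if r ∈ S then Z else 1) S'⁆ = ⁅ww N T, zw N S'⁆ from rfl,
      this]
    exact Submodule.neg_mem _ (Submodule.smul_mem _ _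
      (Submodule.subset_span (Or.inr ⟨S' ∆ T, rfl⟩)))
  · rcases Nat.even_or_odd ((T ∆ T').card) with h | h
    · rw [show ⁅(fun T : Finset (Fin N) =>
        Complex.I • tensorPow N fun r => if r ∈ T then Y else X) T,
        (fun T : Finset (Fin N) =>
        Complex.I • tensorPow N fun r => if r ∈ T then Y else X) T'⁆ = ⁅ww N T, ww N T'⁆ from rfl,
        brWW_even T T' h]
      exact Submodule.zero_mem _
    · obtain ⟨c, hb⟩ := brWW_odd T T' h
      rw [show ⁅(fun T : Finset (Fin N) =>
        Complex.I • tensorPow N fun r => if r ∈ T then Y else X) T,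
        (fun T : Finset (Fin N) =>
        Complex.I • tensorPow N fun r => if r ∈ T then Y else X) T'⁆ = ⁅ww N T, ww N T'⁆ from rfl,
        hb]
      exact Submodule.smul_mem _ _ (Submodule.subset_span (Or.inl ⟨T ∆ T', h, rfl⟩))

noncomputable def VLie (N : ℕ) : LieSubalgebra ℝ (Matrix (Fin N → Fin 2) (Fin N → Fin 2) ℂ) :=
  { Submodule.span ℝ (oddZWords N ∪ xyWords N) with
    lie_mem' := by
      intro x y hx hy
      have main : ∀ x ∈ Submodule.span ℝ (oddZWords N ∪ xyWords N),
          ∀ y ∈ Submodule.span ℝ (oddZWords N ∪ xyWords N),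
          ⁅x, y⁆ ∈ Submodule.span ℝ (oddZWords N ∪ xyWords N) := by
        intro x hx
        refine Submodule.span_induction (fun g hg => ?_) (fun y hy => by
            rw [zero_lie]; exact Submodule.zero_mem _)
          (fun a b _ _ ha hb y hy => by
            rw [add_lie]; exact Submodule.add_mem _ (ha y hy) (hb y hy))
          (fun t a _ ha y hy => by
            rw [smul_lie]; exact Submodule.smul_mem _ _ (ha y hy)) hx
        intro y hy
        refine Submodule.span_induction (fun g' hg' => base_bracket g g' hg hg')
          (by rw [lie_zero]; exact Submodule.zero_mem _)
          (fun a b _ _ ha hb => by rw [lie_add]; exact Submodule.add_mem _ ha hb)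
          (fun t a _ ha => by rw [lie_smul]; exact Submodule.smul_mem _ _ ha) hy
      exact main x hx y hy }


lemma union_eq_range {N : ℕ} : oddZWords N ∪ xyWords N = Set.range (vv (N := N)) := by
  ext A
  constructor
  · rintro (⟨S, hS, rfl⟩ | ⟨T, rfl⟩)
    · exact ⟨Sum.inl ⟨S, hS⟩, rfl⟩
    · exact ⟨Sum.inr T, rfl⟩
  · rintro ⟨i, rfl⟩
    rcases i with S | T
    · exact Or.inl ⟨S.1, S.2, rfl⟩
    · exact Or.inr ⟨T, rfl⟩

section main

variable {N : ℕ}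

noncomputable abbrev KK (N : ℕ) :=
  LieSubalgebra.lieSpan ℝ (Matrix (Fin N → Fin 2) (Fin N → Fin 2) ℂ)
    (oddZWords N ∪ {Complex.I • tensorPow N fun _ => X})

lemma zw_mem_K (S : Finset (Fin N)) (hS : Odd S.card) : zw N S ∈ KK N :=
  LieSubalgebra.subset_lieSpan (Or.inl ⟨S, hS, rfl⟩)

lemma ww_mem_K (hN : 1 ≤ N) (T : Finset (Fin N)) : ww N T ∈ KK N := by
  have hodd : ∀ T' : Finset (Fin N), Odd T'.card → ww N T' ∈ KK N := by
    intro T' hT'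
    obtain ⟨c, hc, hb⟩ := brZW T' ∅ hT'
    have h1 : zw N T' ∈ KK N := zw_mem_K T' hT'
    have h2 : ww N ∅ ∈ KK N := by
      rw [ww_empty]; exact LieSubalgebra.subset_lieSpan (Or.inr rfl)
    have h3 := (KK N).lie_mem h1 h2
    rw [hb] at h3
    have h4 : (T' ∆ (∅ : Finset (Fin N))) = T' := by
      rw [← Finset.bot_eq_empty, symmDiff_bot]
    rw [h4] at h3
    have h5 := (KK N).smul_mem c⁻¹ h3
    rwa [smul_smul, inv_mul_cancel₀ hc, one_smul] at h5
  by_cases hT : Odd T.card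
  · exact hodd T hT
  · have hT1 : Odd ((T ∆ {(⟨0, hN⟩ : Fin N)}).card) := (odd_flip _ T).mpr hT
    have hsing : Odd (({(⟨0, hN⟩ : Fin N)} : Finset (Fin N)).card) := by
      simp
    obtain ⟨c, hc, hb⟩ := brZW {(⟨0, hN⟩ : Fin N)} (T ∆ {(⟨0, hN⟩ : Fin N)}) hsing
    have h1 := zw_mem_K _ hsing
    have h2 := hodd _ hT1
    have h3 := (KK N).lie_mem h1 h2
    rw [hb] at h3
    have heq : ({(⟨0, hN⟩ : Fin N)} : Finset (Fin N)) ∆ (T ∆ {(⟨0, hN⟩ : Fin N)}) = T := by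
      rw [symmDiff_comm T, symmDiff_symmDiff_cancel_left]
    rw [heq] at h3
    have h5 := (KK N).smul_mem c⁻¹ h3
    rwa [smul_smul, inv_mul_cancel₀ hc, one_smul] at h5

lemma main_span_eq (hN : 1 ≤ N) :
    (KK N).toSubmodule = Submodule.span ℝ (oddZWords N ∪ xyWords N) := by
  apply le_antisymm
  · have hle : KK N ≤ VLie N := by
      rw [LieSubalgebra.lieSpan_le]
      rintro A (hA | hA)
      · exact Submodule.subset_span (Or.inl hA)
      · rw [Set.mem_singleton_iff] at hA
        subst hA
        rw [← ww_empty]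
        exact Submodule.subset_span (Or.inr ⟨∅, rfl⟩)
    intro A hA
    exact hle ((LieSubalgebra.mem_toSubmodule _).mp hA)
  · rw [Submodule.span_le]
    rintro A (hA | hA)
    · obtain ⟨S, hS, rfl⟩ := hA
      exact zw_mem_K S hS
    · obtain ⟨T, rfl⟩ := hA
      exact ww_mem_K hN T

end main

/-- The real Lie algebra generated by A = 𝒵 ∪ {i X^{⊗N}} (with 𝒵
the odd-weight Z-words times i) equals the real span of 𝒵 together with all
i·(words in {X,Y}^{⊗N}), and has real dimension 2^{N−1} + 2^N = (3/2)·2^N. -/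
theorem stmt_15 (N : ℕ) (hN : 1 ≤ N) :
    (LieSubalgebra.lieSpan ℝ (Matrix (Fin N → Fin 2) (Fin N → Fin 2) ℂ)
        (oddZWords N ∪ {Complex.I • tensorPow N fun _ => X})).toSubmodule
      = Submodule.span ℝ (oddZWords N ∪ xyWords N) ∧
    Module.finrank ℝ
        (LieSubalgebra.lieSpan ℝ (Matrix (Fin N → Fin 2) (Fin N → Fin 2) ℂ)
          (oddZWords N ∪ {Complex.I • tensorPow N fun _ => X}))
      = 2 ^ (N - 1) + 2 ^ N := by
  refine ⟨main_span_eq hN, ?_⟩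
  have h1 : Module.finrank ℝ (KK N) = Module.finrank ℝ ((KK N).toSubmodule) := rfl
  rw [h1, main_span_eq hN, union_eq_range, finrank_span_eq_card (vv_indep hN)]
  rw [Fintype.card_sum, card_odd_subtype hN, Fintype.card_finset, Fintype.card_fin]

end Stmt15
end
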